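/- Let K₁, …, Kₘ be Markov kernels on X such that there exist ε ∈ (0,1] and probability measures ν₁, …, νₘ on X with Kᵢ(x, A) ≥ ε νᵢ(A) for every i, x and measurable A. Let λ be a probability measure on X and let (X₀, Xₘ) have the joint law λ ⊗ (K₁⋯Kₘ) on X × X (i.e., X₀ ∼ λ and, given X₀ = x, Xₘ ∼ (K₁⋯Kₘ)(x, ·)). Then for all bounded measurable functions f, g: X → ℝ, |E[f(X₀) g(Xₘ)] − E[f(X₀)] E[g(Xₘ)]| ≤ 2 (1 − ε)ᵐ ‖f‖_∞ ‖g‖_∞. (This is the covariance mixing bound of Lemma 16: functionals of a uniformly minorized Markov chain at time lag m have covariance at most 2 ρᵐ times the product of their sup-norms, with ρ = 1 − ε.) -/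

import Mathlib

/-! The minorization `Kᵢ x ≥ ε νᵢ` confines `x ↦ ∫ φ d(Kᵢ x)` to an interval of length
`(1 - ε)` times the oscillation of `φ`, so `G x := ∫ g d(K₁⋯Kₘ)(x)` oscillates by at most
`2 (1 - ε)ᵐ ‖g‖_∞`. Integrating out `Xₘ`, the covariance is `∫ f (G - ∫ G dλ) dλ`, and
`|G - ∫ G dλ|` is at most the oscillation of `G`. -/

open MeasureTheory ProbabilityTheory

/-- The composed kernel `K₁⋯Kₘ`: `compChain K m` applies first `K 0`, then
`K 1`, …, then `K (m-1)` (these play the roles of `K₁, …, Kₘ`). -/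
noncomputable def compChain {X : Type*} [MeasurableSpace X]
    (K : ℕ → Kernel X X) : ℕ → Kernel X X
  | 0 => Kernel.id
  | n + 1 => K n ∘ₖ compChain K n

instance compChain.isMarkovKernel {X : Type*} [MeasurableSpace X]
    (K : ℕ → Kernel X X) [∀ i, IsMarkovKernel (K i)] :
    ∀ n, IsMarkovKernel (compChain K n)
  | 0 => by rw [compChain]; infer_instance
  | n + 1 => by
    rw [compChain]
    have := compChain.isMarkovKernel K n
    infer_instance

open Set

section

variable {X : Type*} [MeasurableSpace X]

section Minorization

variable {μ ν : Measure X} [IsProbabilityMeasure μ] [IsProbabilityMeasure ν] {ε : ℝ}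
  {φ : X → ℝ}

lemma mul_integral_add_le_integral_of_smul_le (hε : 0 ≤ ε) (hle : ENNReal.ofReal ε • ν ≤ μ)
    (hμ : Integrable φ μ) (hν : Integrable φ ν) {a : ℝ} (ha : ∀ x, a ≤ φ x) :
    ε * ∫ x, φ x ∂ν + (1 - ε) * a ≤ ∫ x, φ x ∂μ := by
  have h := integral_mono_measure hle (ae_of_all _ fun x => sub_nonneg.2 (ha x))
    (hμ.sub (integrable_const a))
  rw [integral_smul_measure, integral_sub hν (integrable_const a),
    integral_sub hμ (integrable_const a), ENNReal.toReal_ofReal hε] at h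
  simp only [integral_const, probReal_univ, smul_eq_mul, one_mul] at h
  linear_combination h

lemma integral_mem_Icc_of_smul_le (hε : 0 ≤ ε) (hle : ENNReal.ofReal ε • ν ≤ μ)
    (hφ : Measurable φ) {a b : ℝ} (hab : ∀ x, φ x ∈ Icc a b) :
    ∫ x, φ x ∂μ ∈ Icc (ε * ∫ x, φ x ∂ν + (1 - ε) * a) (ε * ∫ x, φ x ∂ν + (1 - ε) * b) := by
  have hint : ∀ ρ : Measure X, [IsProbabilityMeasure ρ] → Integrable φ ρ := fun ρ _ =>
    Integrable.of_mem_Icc a b hφ.aemeasurable (ae_of_all _ hab)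
  refine ⟨mul_integral_add_le_integral_of_smul_le hε hle (hint μ) (hint ν) fun x => (hab x).1, ?_⟩
  have h := mul_integral_add_le_integral_of_smul_le hε hle (hint μ).neg (hint ν).neg
    (a := -b) fun x => neg_le_neg (hab x).2
  simp only [Pi.neg_apply, integral_neg] at h
  linarith

end Minorization

theorem integral_compChain_sub_le (K : ℕ → Kernel X X) [∀ i, IsMarkovKernel (K i)]
    (ν : ℕ → Measure X) [∀ i, IsProbabilityMeasure (ν i)] {ε : ℝ} (hε : 0 ≤ ε) {n : ℕ}
    (hmin : ∀ i < n, ∀ x, ENNReal.ofReal ε • ν i ≤ K i x)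
    {φ : X → ℝ} (hφ : Measurable φ) {a b : ℝ} (hab : ∀ x, φ x ∈ Icc a b) (x x' : X) :
    ∫ y, φ y ∂compChain K n x - ∫ y, φ y ∂compChain K n x' ≤ (1 - ε) ^ n * (b - a) := by
  induction n generalizing φ a b with
  | zero =>
    simp only [compChain, Kernel.id_apply, integral_dirac' _ _ hφ.stronglyMeasurable,
      pow_zero, one_mul]
    linarith [(hab x).2, (hab x').1]
  | succ n ih =>
    set ψ : X → ℝ := fun y => ∫ z, φ z ∂K n y
    have hcomp : ∀ z, ∫ y, φ y ∂compChain K (n + 1) z = ∫ y, ψ y ∂compChain K n z := fun z =>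
      Kernel.integral_comp (Integrable.of_mem_Icc a b hφ.aemeasurable (ae_of_all _ hab))
    have hψ := fun y => integral_mem_Icc_of_smul_le hε (hmin n n.lt_succ_self y) hφ hab
    calc _ = ∫ y, ψ y ∂compChain K n x - ∫ y, ψ y ∂compChain K n x' := by rw [hcomp, hcomp]
      _ ≤ (1 - ε) ^ n * ((ε * ∫ z, φ z ∂ν n + (1 - ε) * b) -
            (ε * ∫ z, φ z ∂ν n + (1 - ε) * a)) :=
        ih (fun i hi => hmin i (hi.trans n.lt_succ_self))
          hφ.stronglyMeasurable.integral_kernel.measurable hψ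
      _ = (1 - ε) ^ (n + 1) * (b - a) := by ring

section Covariance

variable {μ : Measure X} [IsProbabilityMeasure μ]

lemma abs_sub_integral_le_of_sub_le {F : X → ℝ} (hF : Integrable F μ) {δ : ℝ}
    (hδ : ∀ x x', F x - F x' ≤ δ) (x : X) : |F x - ∫ y, F y ∂μ| ≤ δ := by
  have lower : F x - δ ≤ ∫ y, F y ∂μ := by
    simpa using integral_mono (integrable_const (F x - δ)) hF fun y => by linarith [hδ x y]
  have upper : ∫ y, F y ∂μ ≤ F x + δ := by
    simpa using integral_mono hF (integrable_const (F x + δ)) fun y => by linarith [hδ y x]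
  rw [abs_sub_le_iff]
  constructor <;> linarith

lemma abs_integral_mul_sub_le {f F : X → ℝ} (hf : Measurable f) {C : ℝ} (hfC : ∀ x, |f x| ≤ C)
    (hF : Measurable F) {δ : ℝ} (hδ : ∀ x x', F x - F x' ≤ δ) :
    |∫ x, f x * F x ∂μ - (∫ x, f x ∂μ) * ∫ x, F x ∂μ| ≤ C * δ := by
  obtain ⟨x₀⟩ := nonempty_of_isProbabilityMeasure μ
  have hF_int : Integrable F μ := Integrable.of_mem_Icc (F x₀ - δ) (F x₀ + δ) hF.aemeasurable
    (ae_of_all _ fun x => ⟨by linarith [hδ x₀ x], by linarith [hδ x x₀]⟩)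
  have hf_int : Integrable f μ :=
    Integrable.of_mem_Icc (-C) C hf.aemeasurable (ae_of_all _ fun x => abs_le.1 (hfC x))
  set c := ∫ x, F x ∂μ
  have hcentered : ∫ x, f x * F x ∂μ - (∫ x, f x ∂μ) * c = ∫ x, f x * (F x - c) ∂μ := by
    simp_rw [mul_sub]
    rw [integral_sub (hF_int.bdd_mul hf.aestronglyMeasurable (ae_of_all _ hfC))
      (hf_int.mul_const c), integral_mul_const]
  have hbound : ∀ x, ‖f x * (F x - c)‖ ≤ C * δ := fun x => by
    rw [Real.norm_eq_abs, abs_mul]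
    exact mul_le_mul (hfC x) (abs_sub_integral_le_of_sub_le hF_int hδ x) (abs_nonneg _)
      ((abs_nonneg _).trans (hfC x))
  rw [hcentered]
  simpa using norm_integral_le_of_norm_le_const (μ := μ) (ae_of_all _ hbound)

end Covariance

section CompProd

variable {Y : Type*} [MeasurableSpace Y] {μ : Measure X} {κ : Kernel X Y} [IsMarkovKernel κ]

lemma integral_compProd_fst_mul_snd [IsFiniteMeasure μ] {f : X → ℝ} {g : Y → ℝ}
    (hf : Measurable f) (hg : Measurable g) {Cf Cg : ℝ} (hfC : ∀ x, |f x| ≤ Cf)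
    (hgC : ∀ y, |g y| ≤ Cg) :
    ∫ p, f p.1 * g p.2 ∂(μ ⊗ₘ κ) = ∫ x, f x * ∫ y, g y ∂κ x ∂μ := by
  have hg_int : Integrable (fun p : X × Y => g p.2) (μ ⊗ₘ κ) :=
    Integrable.of_mem_Icc (-Cg) Cg (hg.comp measurable_snd).aemeasurable
      (ae_of_all _ fun p => abs_le.1 (hgC p.2))
  have hfg_int : Integrable (fun p : X × Y => f p.1 * g p.2) (μ ⊗ₘ κ) :=
    hg_int.bdd_mul (hf.comp measurable_fst).aestronglyMeasurable (ae_of_all _ fun p => hfC p.1)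
  simp_rw [Measure.integral_compProd hfg_int, integral_const_mul]

lemma covariance_compProd_eq [IsProbabilityMeasure μ] {f : X → ℝ} {g : Y → ℝ}
    (hf : Measurable f) (hg : Measurable g)
    {Cf Cg : ℝ} (hfC : ∀ x, |f x| ≤ Cf) (hgC : ∀ y, |g y| ≤ Cg) :
    ∫ p, f p.1 * g p.2 ∂(μ ⊗ₘ κ) - (∫ p, f p.1 ∂(μ ⊗ₘ κ)) * ∫ p, g p.2 ∂(μ ⊗ₘ κ) =
      ∫ x, f x * ∫ y, g y ∂κ x ∂μ - (∫ x, f x ∂μ) * ∫ x, ∫ y, g y ∂κ x ∂μ := by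
  have hfst := integral_compProd_fst_mul_snd (μ := μ) (κ := κ) hf measurable_const hfC
    fun _ => abs_one.le
  have hsnd := integral_compProd_fst_mul_snd (μ := μ) (κ := κ) measurable_const hg
    (fun _ => abs_one.le) hgC
  simp only [mul_one, one_mul, integral_const, probReal_univ, smul_eq_mul] at hfst hsnd
  rw [integral_compProd_fst_mul_snd hf hg hfC hgC, hfst, hsnd]

end CompProd

end

theorem covariance_mixing_bound_general
    {X : Type*} [MeasurableSpace X]
    (m : ℕ) (K : ℕ → Kernel X X) [∀ i, IsMarkovKernel (K i)]
    (ε : ℝ) (hε0 : 0 < ε)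
    (ν : ℕ → Measure X) (hν : ∀ i, IsProbabilityMeasure (ν i))
    (hmin : ∀ i < m, ∀ x : X, ∀ A : Set X, MeasurableSet A →
      ENNReal.ofReal ε * ν i A ≤ K i x A)
    (lam : Measure X) [IsProbabilityMeasure lam]
    (f g : X → ℝ) (hf : Measurable f) (hg : Measurable g)
    (Cf Cg : ℝ)
    (hCf : ∀ x, |f x| ≤ Cf) (hCg : ∀ x, |g x| ≤ Cg) :
    |(∫ p, f p.1 * g p.2 ∂(lam.compProd (compChain K m))) -
        (∫ p, f p.1 ∂(lam.compProd (compChain K m))) *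
          (∫ p, g p.2 ∂(lam.compProd (compChain K m)))| ≤
      2 * (1 - ε) ^ m * Cf * Cg := by
  have hle : ∀ i < m, ∀ x, ENNReal.ofReal ε • ν i ≤ K i x := fun i hi x =>
    Measure.le_iff.2 fun A hA => hmin i hi x A hA
  have hosc : ∀ x x', ∫ y, g y ∂compChain K m x - ∫ y, g y ∂compChain K m x' ≤
      (1 - ε) ^ m * (Cg - -Cg) :=
    integral_compChain_sub_le K ν hε0.le hle hg fun x => abs_le.1 (hCg x)
  rw [covariance_compProd_eq hf hg hCf hCg]
  calc _ ≤ Cf * ((1 - ε) ^ m * (Cg - -Cg)) :=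
        abs_integral_mul_sub_le hf hCf hg.stronglyMeasurable.integral_kernel.measurable hosc
    _ = 2 * (1 - ε) ^ m * Cf * Cg := by ring

/-- covariance mixing bound of Lemma 16. If the Markov
kernels `K₁, …, Kₘ` all admit a Doeblin minorization `Kᵢ(x, A) ≥ ε νᵢ(A)` with a
common `ε ∈ (0,1]`, and `(X₀, Xₘ)` has joint law `λ ⊗ (K₁⋯Kₘ)`, then for all
bounded measurable `f, g`,
`|E[f(X₀)g(Xₘ)] − E[f(X₀)]E[g(Xₘ)]| ≤ 2 (1 − ε)ᵐ ‖f‖_∞ ‖g‖_∞`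
(stated with arbitrary upper bounds `Cf, Cg ≥ 0` for `|f|, |g|`). -/
theorem covariance_mixing_bound
    {X : Type*} [MeasurableSpace X]
    (m : ℕ) (K : ℕ → Kernel X X) [∀ i, IsMarkovKernel (K i)]
    (ε : ℝ) (hε0 : 0 < ε) (hε1 : ε ≤ 1)
    (ν : ℕ → Measure X) (hν : ∀ i, IsProbabilityMeasure (ν i))
    (hmin : ∀ i < m, ∀ x : X, ∀ A : Set X, MeasurableSet A →
      ENNReal.ofReal ε * ν i A ≤ K i x A)
    (lam : Measure X) [IsProbabilityMeasure lam]
    (f g : X → ℝ) (hf : Measurable f) (hg : Measurable g)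
    (Cf Cg : ℝ) (hCf0 : 0 ≤ Cf) (hCg0 : 0 ≤ Cg)
    (hCf : ∀ x, |f x| ≤ Cf) (hCg : ∀ x, |g x| ≤ Cg) :
    |(∫ p, f p.1 * g p.2 ∂(lam.compProd (compChain K m))) -
        (∫ p, f p.1 ∂(lam.compProd (compChain K m))) *
          (∫ p, g p.2 ∂(lam.compProd (compChain K m)))| ≤
      2 * (1 - ε) ^ m * Cf * Cg :=
  covariance_mixing_bound_general m K ε hε0 ν hν hmin lam f g hf hg Cf Cg hCf hCg
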